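/- arXiv:2308.08787 — 4 statements merged into one kernel-verified Lean document; each statement's English description precedes it below -/
import Mathlib

section
/- (Lemma 2, existence part) Suppose x̄ ∈ ℝ^{N₁} has strictly increasing entries with consecutive gaps ≥ d_min and satisfies a(x̄,θ_k)^H a(x̄,θ₀) = 0 for k = 1,...,K₁. Assume cos θ_{K₁+1} ≠ cos θ₀. Let N₂ ≥ 2 and choose d = (q + 1/N₂)λ/|cos θ₀ − cos θ_{K₁+1}| with q an integer large enough that x̄₁ + d − x̄_{N₁} ≥ d_min. Then the vector x̂ ∈ ℝ^{N₁N₂} with x̂_{tN₁+m} = x̄_m + t·d satisfies: (i) a(x̂,θ_k)^H a(x̂,θ₀) = 0 for all k = 1,...,K₁+1, and (ii) |x̂_m − x̂_n| ≥ d_min for all m ≠ n. -/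
/-!
Writing `κ = 2π/λ`, the correlation `a(x, θ)ᴴ a(x, θ₀)` is the array factor
`∑ₙ exp(i κ (cos θ₀ - cos θ) xₙ)`. The tiled array `x̂ = x̄ + t d` is the sum of `x̄` and a uniform
linear array, so its array factor is the product of theirs. The factor of `x̄` vanishes at
`θ₁, …, θ_{K₁}`; at `θ_{K₁+1}` the choice of `d` makes the phase step of the uniform array a
nontrivial `N₂`-th root of unity, so its geometric sum vanishes. The spacing bound holds inside each
copy of `x̄` by the gap condition, and between copies because `d` exceeds the aperture of `x̄` by
at least `d_min`.
-/

open Complex Finset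

-- `a(x, θ)ᴴ a(x, θ₀) = arrayFactor x ((2π/λ) (cos θ₀ - cos θ))`.
noncomputable def arrayFactor {ι : Type*} [Fintype ι] (x : ι → ℝ) (c : ℝ) : ℂ :=
  ∑ n, cexp (I * ↑(c * x n))

section ArrayFactor

variable {ι ι' : Type*} [Fintype ι] [Fintype ι']

theorem conj_exp_mul_exp (a b : ℝ) :
    starRingEnd ℂ (cexp (I * ↑a)) * cexp (I * ↑b) = cexp (I * ↑(b - a)) := by
  rw [← exp_conj, map_mul, conj_I, conj_ofReal, ← exp_add]
  push_cast
  ring_nf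

theorem sum_conj_exp_mul_exp_eq_arrayFactor (x : ι → ℝ) (κ u v : ℝ) :
    ∑ n, starRingEnd ℂ (cexp (I * ↑(κ * x n * u))) * cexp (I * ↑(κ * x n * v)) =
      arrayFactor x (κ * (v - u)) := by
  refine sum_congr rfl fun n _ => ?_
  rw [conj_exp_mul_exp]
  ring_nf

theorem arrayFactor_add (y : ι → ℝ) (x : ι' → ℝ) (c : ℝ) :
    arrayFactor (fun p : ι × ι' => y p.1 + x p.2) c = arrayFactor y c * arrayFactor x c := by
  simp only [arrayFactor, sum_mul_sum, ← exp_add, Fintype.sum_prod_type]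
  push_cast
  ring_nf

theorem arrayFactor_uniform_eq_zero {N : ℕ} {r : ℝ} (hNr : ∃ n : ℤ, N * r = n)
    (hr : ∀ n : ℤ, r ≠ n) {c d : ℝ} (hcd : c * d = 2 * Real.pi * r) :
    arrayFactor (fun t : Fin N => (t : ℝ) * d) c = 0 := by
  set ω := cexp (I * ↑(2 * Real.pi * r))
  have hpow : ∀ t : ℕ, cexp (I * ↑(c * (t * d))) = ω ^ t := fun t => by
    rw [← exp_nat_mul, mul_left_comm c, hcd]
    push_cast
    ring_nf
  have hω_pow : ω ^ N = 1 := by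
    obtain ⟨n, hn⟩ := hNr
    rw [← hpow, ← mul_assoc, mul_comm c, mul_assoc, hcd, mul_left_comm, hn, exp_eq_one_iff]
    exact ⟨n, by push_cast; ring⟩
  have hω_ne : ω ≠ 1 := by
    rw [Ne, exp_eq_one_iff]
    rintro ⟨n, hn⟩
    apply hr n
    have : ((r : ℝ) : ℂ) = n := by
      apply mul_left_cancel₀ (mul_ne_zero (mul_ne_zero two_ne_zero (ofReal_ne_zero.2 Real.pi_ne_zero)) I_ne_zero)
      push_cast at hn
      linear_combination hn
    exact_mod_cast this
  simp only [arrayFactor, hpow]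
  rw [Fin.sum_univ_eq_sum_range (ω ^ ·), geom_sum_eq hω_ne, hω_pow, sub_self, zero_div]

end ArrayFactor

theorem intCast_add_one_div_ne_intCast (q : ℤ) {N : ℕ} (hN : 2 ≤ N) (n : ℤ) :
    (q : ℝ) + 1 / N ≠ n := by
  intro h
  have hN' : (2 : ℝ) ≤ N := by exact_mod_cast hN
  have hpos : (0 : ℝ) < 1 / N := by positivity
  have hlt : (1 : ℝ) / N < 1 := by rw [div_lt_one (by linarith)]; linarith
  have h₁ : (q : ℝ) < n := by linarith
  have h₂ : (n : ℝ) < q + 1 := by linarith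
  have h₁' : q < n := by exact_mod_cast h₁
  have h₂' : n < q + 1 := by exact_mod_cast h₂
  omega

-- This is the paper's spacing `(q + 1/N) λ / |cos θ₀ - cos θ|`, with `c = (2π/λ)(cos θ₀ - cos θ)`.
theorem arrayFactor_uniform_spacing_eq_zero {N : ℕ} (hN : 2 ≤ N) (q : ℤ) {c : ℝ} (hc : c ≠ 0) :
    arrayFactor (fun t : Fin N => (t : ℝ) * (((q : ℝ) + 1 / N) * (2 * Real.pi / |c|))) c = 0 := by
  have hN0 : (N : ℝ) ≠ 0 := by positivity
  have hq := intCast_add_one_div_ne_intCast q hN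
  rcases abs_choice c with habs | habs
  · refine arrayFactor_uniform_eq_zero (r := q + 1 / N) ⟨q * N + 1, ?_⟩ hq ?_
    · push_cast; field_simp
    · rw [habs]; field_simp
  · refine arrayFactor_uniform_eq_zero (r := -(q + 1 / N)) ⟨-(q * N + 1), ?_⟩
      (fun n h => hq (-n) (by push_cast; linarith)) ?_
    · push_cast; field_simp
    · rw [habs]; field_simp

section Spacing

variable {N : ℕ} {x : Fin N → ℝ} {δ : ℝ}

theorem add_le_of_lt_of_gap (hx : Monotone x)
    (hgap : ∀ i : Fin N, ∀ h : (i : ℕ) + 1 < N, x i + δ ≤ x ⟨(i : ℕ) + 1, h⟩)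
    {i j : Fin N} (hij : i < j) : x i + δ ≤ x j :=
  (hgap i (by omega)).trans (hx (Fin.le_def.2 hij))

theorem le_abs_sub_of_gap (hx : Monotone x)
    (hgap : ∀ i : Fin N, ∀ h : (i : ℕ) + 1 < N, x i + δ ≤ x ⟨(i : ℕ) + 1, h⟩)
    {i j : Fin N} (hij : i ≠ j) : δ ≤ |x i - x j| := by
  rcases hij.lt_or_gt with h | h
  · rw [abs_sub_comm]
    linarith [add_le_of_lt_of_gap hx hgap h, le_abs_self (x j - x i)]
  · linarith [add_le_of_lt_of_gap hx hgap h, le_abs_self (x i - x j)]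

theorem le_abs_sub_of_tile {M : ℕ} (hN : 0 < N) (hx : Monotone x)
    (hgap : ∀ i : Fin N, ∀ h : (i : ℕ) + 1 < N, x i + δ ≤ x ⟨(i : ℕ) + 1, h⟩) (hδ : 0 ≤ δ)
    {d : ℝ} (hd : δ ≤ x ⟨0, hN⟩ + d - x ⟨N - 1, by omega⟩) {p r : Fin M × Fin N} (hpr : p ≠ r) :
    δ ≤ |((p.1 : ℝ) * d + x p.2) - ((r.1 : ℝ) * d + x r.2)| := by
  wlog hle : p.1 ≤ r.1 generalizing p r
  · rw [abs_sub_comm]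
    exact this hpr.symm (le_of_not_ge hle)
  have hspan : ∀ m n : Fin N, x m - x n ≤ x ⟨N - 1, by omega⟩ - x ⟨0, hN⟩ := fun m n =>
    sub_le_sub (hx (Fin.le_def.2 (by simp; omega))) (hx (Fin.le_def.2 (by simp)))
  rcases hle.lt_or_eq with hlt | heq
  · have hstep : (p.1 : ℝ) + 1 ≤ r.1 := by exact_mod_cast hlt
    have hd0 : 0 ≤ d := by
      linarith [hx (Fin.le_def.2 (by simp) : (⟨0, hN⟩ : Fin N) ≤ ⟨N - 1, by omega⟩)]
    rw [abs_sub_comm]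
    nlinarith [hspan p.2 r.2, le_abs_self ((r.1 : ℝ) * d + x r.2 - ((p.1 : ℝ) * d + x p.2))]
  · have h2 : p.2 ≠ r.2 := fun h => hpr (Prod.ext heq h)
    rw [heq, add_sub_add_left_eq_sub]
    exact le_abs_sub_of_gap hx hgap h2

end Spacing

/-- Lemma 2 (existence part): composing a sub-array `x̄` satisfying the SVO condition
for `K₁` null directions with a uniform offset array of spacing
`d = (q + 1/N₂) λ / |cos θ₀ - cos θ_{K₁+1}|` yields an `N₁N₂`-element array satisfying
the SVO condition for all `K₁ + 1` null directions and the minimum-spacing constraint. -/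
theorem stmt_4 (N₁ N₂ K₁ : ℕ) (hN₁ : 0 < N₁) (hN₂ : 2 ≤ N₂)
    (lam dmin : ℝ) (hlam : 0 < lam) (hdmin : 0 < dmin)
    (θ₀ : ℝ) (θ : Fin (K₁ + 1) → ℝ)
    (xbar : Fin N₁ → ℝ) (hmono : StrictMono xbar)
    (hgap : ∀ i : Fin N₁, ∀ h : (i : ℕ) + 1 < N₁, xbar i + dmin ≤ xbar ⟨(i : ℕ) + 1, h⟩)
    (hSVO : ∀ k : Fin K₁,
      (∑ n : Fin N₁,
        (starRingEnd ℂ) (Complex.exp (Complex.I * ((2 * Real.pi / lam) * xbar n * Real.cos (θ k.castSucc) : ℝ))) *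
          Complex.exp (Complex.I * ((2 * Real.pi / lam) * xbar n * Real.cos θ₀ : ℝ))) = 0)
    (hcos : Real.cos (θ (Fin.last K₁)) ≠ Real.cos θ₀)
    (q : ℤ) (d : ℝ)
    (hd : d = ((q : ℝ) + 1 / N₂) * lam / |Real.cos θ₀ - Real.cos (θ (Fin.last K₁))|)
    (hq : dmin ≤ xbar ⟨0, hN₁⟩ + d - xbar ⟨N₁ - 1, Nat.sub_lt hN₁ Nat.one_pos⟩)
    (xhat : Fin N₂ × Fin N₁ → ℝ)
    (hxhat : ∀ t : Fin N₂, ∀ m : Fin N₁, xhat (t, m) = xbar m + (t : ℝ) * d) :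
    (∀ k : Fin (K₁ + 1),
      (∑ p : Fin N₂ × Fin N₁,
        (starRingEnd ℂ) (Complex.exp (Complex.I * ((2 * Real.pi / lam) * xhat p * Real.cos (θ k) : ℝ))) *
          Complex.exp (Complex.I * ((2 * Real.pi / lam) * xhat p * Real.cos θ₀ : ℝ))) = 0) ∧
    (∀ p r : Fin N₂ × Fin N₁, p ≠ r → dmin ≤ |xhat p - xhat r|) := by
  obtain rfl : xhat = fun p => (p.1 : ℝ) * d + xbar p.2 :=
    funext fun p => (hxhat p.1 p.2).trans (add_comm _ _)
  refine ⟨fun k => ?_, fun p r => le_abs_sub_of_tile hN₁ hmono.monotone hgap hdmin.le hq⟩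
  rw [sum_conj_exp_mul_exp_eq_arrayFactor, arrayFactor_add (fun t : Fin N₂ => (t : ℝ) * d) xbar]
  induction k using Fin.lastCases with
  | last =>
    have hc : 2 * Real.pi / lam * (Real.cos θ₀ - Real.cos (θ (Fin.last K₁))) ≠ 0 :=
      mul_ne_zero (by positivity) (sub_ne_zero.2 hcos.symm)
    have hd' : d = ((q : ℝ) + 1 / N₂) *
        (2 * Real.pi / |2 * Real.pi / lam * (Real.cos θ₀ - Real.cos (θ (Fin.last K₁)))|) := by
      rw [hd, abs_mul, abs_of_pos (by positivity : 0 < 2 * Real.pi / lam)]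
      field_simp
    rw [hd', arrayFactor_uniform_spacing_eq_zero hN₂ q hc, zero_mul]
  | cast k =>
    rw [← sum_conj_exp_mul_exp_eq_arrayFactor xbar, hSVO k, mul_zero]
end

section
/- Let f₁,...,f_I ≥ 2 be integers, N = ∏ f_i, and d₁,...,d_I real numbers. Define positions x_n = ∑_i z_i(n) d_i where (z_i(n)) is the mixed-radix digit vector of n−1 in bases (f₁,...,f_I). Then for any angle pair (θ₀, θ_k), the steering-vector inner product factors as a(x,θ_k)^H a(x,θ₀) = ∏_{i=1}^{I} ∑_{z=0}^{f_i−1} exp(i(2π/λ)·z·d_i·(cos θ₀ − cos θ_k)). Consequently, if for each k ≤ K there is some index i with ∑_{z=0}^{f_i−1} exp(i(2π/λ) z d_i (cos θ₀ − cos θ_k)) = 0, then the SVO condition holds for all K directions simultaneously. -/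
open Complex Finset

/-- Factorization of the steering-vector inner product for the mixed-radix position
construction `x_z = ∑ i z_i d_i` (antennas indexed by their digit vectors
`z ∈ ∏ i, {0,…,f_i-1}`): `a(x,θ_k)ᴴ a(x,θ₀)` factors as a product over the radices,
and consequently if for each null direction some factor vanishes, the SVO condition
holds for all `K` directions simultaneously. -/
theorem stmt_12 (I K : ℕ) (f : Fin I → ℕ) (hf : ∀ i, 2 ≤ f i)
    (d : Fin I → ℝ) (lam : ℝ) (hlam : 0 < lam)
    (θ₀ : ℝ) (θ : Fin K → ℝ)
    (x : (∀ i : Fin I, Fin (f i)) → ℝ)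
    (hx : ∀ z, x z = ∑ i, (z i : ℝ) * d i) :
    (∀ φ : ℝ,
      (∑ z : ∀ i : Fin I, Fin (f i),
        (starRingEnd ℂ) (Complex.exp (Complex.I * ((2 * Real.pi / lam) * x z * Real.cos φ : ℝ))) *
          Complex.exp (Complex.I * ((2 * Real.pi / lam) * x z * Real.cos θ₀ : ℝ))) =
      ∏ i : Fin I, ∑ z ∈ Finset.range (f i),
        Complex.exp (Complex.I *
          ((2 * Real.pi / lam) * ((z : ℝ) * d i) * (Real.cos θ₀ - Real.cos φ) : ℝ))) ∧
    ((∀ k : Fin K, ∃ i : Fin I,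
        (∑ z ∈ Finset.range (f i),
          Complex.exp (Complex.I *
            ((2 * Real.pi / lam) * ((z : ℝ) * d i) * (Real.cos θ₀ - Real.cos (θ k)) : ℝ))) = 0) →
      ∀ k : Fin K,
        (∑ z : ∀ i : Fin I, Fin (f i),
          (starRingEnd ℂ) (Complex.exp (Complex.I * ((2 * Real.pi / lam) * x z * Real.cos (θ k) : ℝ))) *
            Complex.exp (Complex.I * ((2 * Real.pi / lam) * x z * Real.cos θ₀ : ℝ))) = 0) := by
  have key : ∀ φ : ℝ,
      (∑ z : ∀ i : Fin I, Fin (f i),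
        (starRingEnd ℂ) (Complex.exp (Complex.I * ((2 * Real.pi / lam) * x z * Real.cos φ : ℝ))) *
          Complex.exp (Complex.I * ((2 * Real.pi / lam) * x z * Real.cos θ₀ : ℝ))) =
      ∏ i : Fin I, ∑ z ∈ Finset.range (f i),
        Complex.exp (Complex.I *
          ((2 * Real.pi / lam) * ((z : ℝ) * d i) * (Real.cos θ₀ - Real.cos φ) : ℝ)) := by
    intro φ
    have step1 : ∀ z : ∀ i : Fin I, Fin (f i),
        (starRingEnd ℂ) (Complex.exp (Complex.I * ((2 * Real.pi / lam) * x z * Real.cos φ : ℝ))) *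
          Complex.exp (Complex.I * ((2 * Real.pi / lam) * x z * Real.cos θ₀ : ℝ)) =
        ∏ i : Fin I, Complex.exp (Complex.I *
          ((2 * Real.pi / lam) * (((z i : ℕ) : ℝ) * d i) * (Real.cos θ₀ - Real.cos φ) : ℝ)) := by
      intro z
      rw [← Complex.exp_conj, ← Complex.exp_add, ← Complex.exp_sum]
      congr 1
      have : ∀ r : ℝ, (starRingEnd ℂ) (Complex.I * (r : ℂ)) = -(Complex.I * r) := by
        intro r; simp [map_mul, Complex.conj_I]
      rw [this, hx z]
      push_cast
      rw [show -(Complex.I * ((2 * (Real.pi:ℂ) / lam * ∑ j : Fin I, ((z j : ℕ) : ℂ) * (d j : ℂ)) * Complex.cos φ)) +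
          Complex.I * ((2 * (Real.pi:ℂ) / lam * ∑ j : Fin I, ((z j : ℕ) : ℂ) * (d j : ℂ)) * Complex.cos θ₀) =
          Complex.I * (2 * (Real.pi:ℂ) / lam * (∑ j : Fin I, ((z j : ℕ) : ℂ) * (d j : ℂ)) * (Complex.cos θ₀ - Complex.cos φ)) from by ring]
      simp only [Finset.mul_sum, Finset.sum_mul]
    rw [Finset.sum_congr rfl (fun z _ => step1 z)]
    refine Eq.symm ?_
    calc (∏ i : Fin I, ∑ z ∈ Finset.range (f i),
          Complex.exp (Complex.I * ((2 * Real.pi / lam * ((z:ℝ) * d i) * (Real.cos θ₀ - Real.cos φ) : ℝ))))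
        = ∏ i : Fin I, ∑ z : Fin (f i),
          Complex.exp (Complex.I * ((2 * Real.pi / lam * (((z:ℕ):ℝ) * d i) * (Real.cos θ₀ - Real.cos φ) : ℝ))) :=
          Finset.prod_congr rfl fun i _ => (Fin.sum_univ_eq_sum_range _ _).symm
      _ = _ := Fintype.prod_sum _
  refine ⟨key, fun h k => ?_⟩
  rw [key (θ k)]
  obtain ⟨i, hi⟩ := h k
  exact Finset.prod_eq_zero (Finset.mem_univ i) hi
end

section
/- In the construction of Theorem 1, if d_i ≥ ∑_{j=1}^{i−1}(f_j − 1)d_j + d_min for every i (with the empty sum equal to 0), then all positions x_n = ∑_i z_i(n) d_i are distinct and satisfy |x_m − x_n| ≥ d_min for all m ≠ n. -/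
open Finset

/-- Minimum-spacing property of the mixed-radix position construction: if
`d_i ≥ ∑_{j<i} (f_j - 1) d_j + d_min` for every `i`, then the positions
`x_z = ∑ i z_i d_i` (indexed by digit vectors `z`) are pairwise distinct and
separated by at least `d_min`. -/
theorem stmt_13 (I : ℕ) (f : Fin I → ℕ) (hf : ∀ i, 2 ≤ f i)
    (d : Fin I → ℝ) (hd : ∀ i, 0 < d i) (dmin : ℝ) (hdmin : 0 < dmin)
    (hsep : ∀ i : Fin I, (∑ j ∈ Finset.Iio i, ((f j : ℝ) - 1) * d j) + dmin ≤ d i)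
    (x : (∀ i : Fin I, Fin (f i)) → ℝ)
    (hx : ∀ z, x z = ∑ i, (z i : ℝ) * d i) :
    Function.Injective x ∧
    ∀ z z' : (∀ i : Fin I, Fin (f i)), z ≠ z' → dmin ≤ |x z - x z'| := by
  have key : ∀ (z z' : ∀ i : Fin I, Fin (f i)) (i : Fin I),
      (∀ j, i < j → z j = z' j) → (z' i : ℕ) < (z i : ℕ) → dmin ≤ x z - x z' := by
    intro z z' i hhigh hlt
    have hdiff : x z - x z' = ∑ j, ((z j : ℝ) - (z' j : ℝ)) * d j := by
      rw [hx, hx, ← Finset.sum_sub_distrib]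
      exact Finset.sum_congr rfl (fun j _ => by ring)
    have hsub : ∑ j, ((z j : ℝ) - (z' j : ℝ)) * d j
        = ∑ j ∈ Finset.Iic i, ((z j : ℝ) - (z' j : ℝ)) * d j := by
      symm
      apply Finset.sum_subset (Finset.subset_univ _)
      intro j _ hj
      have : i < j := by
        simpa using lt_of_not_ge (by simpa [Finset.mem_Iic] using hj)
      rw [hhigh j this]; ring
    rw [hdiff, hsub, ← Finset.Iio_insert, Finset.sum_insert (by simp)]
    have h1 : d i ≤ ((z i : ℝ) - (z' i : ℝ)) * d i := by
      nlinarith [hd i, (by exact_mod_cast Nat.succ_le_of_lt hlt :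
        (z' i : ℝ) + 1 ≤ (z i : ℝ))]
    have h2 : ∀ j ∈ Finset.Iio i,
        -(((f j : ℝ) - 1) * d j) ≤ ((z j : ℝ) - (z' j : ℝ)) * d j := by
      intro j _
      have hz' : ((z' j : ℝ)) ≤ (f j : ℝ) - 1 := by
        have := (z' j).isLt
        have : ((z' j : ℕ) : ℝ) ≤ ((f j : ℝ) - 1) := by
          have h := Nat.lt_iff_add_one_le.mp (z' j).isLt
          have : ((z' j : ℕ) : ℝ) + 1 ≤ (f j : ℝ) := by exact_mod_cast h
          linarith
        exact this
      have hz : (0 : ℝ) ≤ (z j : ℝ) := by positivity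
      nlinarith [hd j]
    have h3 : -(∑ j ∈ Finset.Iio i, ((f j : ℝ) - 1) * d j)
        ≤ ∑ j ∈ Finset.Iio i, ((z j : ℝ) - (z' j : ℝ)) * d j := by
      rw [← Finset.sum_neg_distrib]
      exact Finset.sum_le_sum h2
    have := hsep i
    linarith
  have main : ∀ z z' : (∀ i : Fin I, Fin (f i)), z ≠ z' → dmin ≤ |x z - x z'| := by
    intro z z' hne
    have hS : (Finset.univ.filter (fun i => z i ≠ z' i)).Nonempty := by
      by_contra h
      apply hne
      funext i
      by_contra hi
      exact h ⟨i, Finset.mem_filter.mpr ⟨Finset.mem_univ i, hi⟩⟩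
    classical
    let S := Finset.univ.filter (fun i : Fin I => z i ≠ z' i)
    obtain ⟨m, hmS, hmax⟩ := Finset.exists_max_image S id hS
    have hmne : z m ≠ z' m := (Finset.mem_filter.mp hmS).2
    have hhigh : ∀ j, m < j → z j = z' j := by
      intro j hj
      by_contra hjne
      have : j ∈ S := Finset.mem_filter.mpr ⟨Finset.mem_univ j, hjne⟩
      exact absurd (hmax j this) (not_le_of_gt hj)
    have hnatne : (z m : ℕ) ≠ (z' m : ℕ) := fun h => hmne (Fin.ext h)
    rcases lt_or_gt_of_ne hnatne with h | h
    · have := key z' z m (fun j hj => (hhigh j hj).symm) h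
      rw [abs_sub_comm]
      calc dmin ≤ x z' - x z := this
        _ ≤ |x z' - x z| := le_abs_self _
    · have := key z z' m hhigh h
      calc dmin ≤ x z - x z' := this
        _ ≤ |x z - x z'| := le_abs_self _
  refine ⟨?_, main⟩
  intro z z' hxx
  by_contra hne
  have := main z z' hne
  rw [hxx, sub_self, abs_zero] at this
  linarith
end

section
/- If K ≤ Ω(N) (number of prime factors of N with multiplicity) and cos θ_k ≠ cos θ₀ for 1 ≤ k ≤ K, then the optimum of the joint beamforming problem max_{x,w: ‖w‖=1, |x_m−x_n|≥d_min, a(x,θ_k)^H w = 0 ∀k} |a(x,θ₀)^H w|² equals N, the full array gain. -/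
/-!
Cauchy–Schwarz bounds the gain by `N`, with equality for `w = a(x, θ₀) / √N`; this `w` meets the
nulls exactly when `∑ₙ exp(i cₖ xₙ) = 0` for the spatial frequencies
`cₖ = (2π/λ)(cos θ₀ - cos θₖ) ≠ 0`. Such positions are built one prime factor at a time: if
`N = p M` and `x'` on `M` antennas nulls `c₁, …, c_{K-1}`, place `p` copies of `x'` shifted by
`0, t, …, (p-1) t`. The sum factorises as `(∑ₐ ζᵃ) · ∑ₙ exp(i c xₙ')` with `ζ = exp(i c t)`;
choosing `t` with `ζ = exp(2πi/p)` kills the first factor at `c = c_K`, and taking `t` larger than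
the spread of `x'` plus `d_min` keeps the copies apart.
-/

open Complex Finset

noncomputable def arrayResponse {ι : Type*} [Fintype ι] (x : ι → ℝ) (c : ℝ) : ℂ :=
  ∑ n, exp (I * ↑(c * x n))

def IsSeparatedBy {ι : Type*} (d : ℝ) (x : ι → ℝ) : Prop :=
  Pairwise fun m n => d ≤ |x m - x n|

section Separation

variable {ι κ : Type*}

theorem IsSeparatedBy.mono {d d' : ℝ} {x : ι → ℝ} (h : IsSeparatedBy d' x) (hd : d ≤ d') :
    IsSeparatedBy d x :=
  fun _ _ hmn => hd.trans (h hmn)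

theorem IsSeparatedBy.comp_injective {d : ℝ} {x : ι → ℝ} (h : IsSeparatedBy d x) {f : κ → ι}
    (hf : f.Injective) : IsSeparatedBy d (x ∘ f) :=
  h.comp_of_injective hf

theorem isSeparatedBy_mul_natCast {t : ℝ} (ht : 0 ≤ t) (p : ℕ) :
    IsSeparatedBy t fun a : Fin p => t * a := by
  intro a b hab
  have hab' : ((a : ℕ) : ℤ) - b ≠ 0 := sub_ne_zero.2 (by exact_mod_cast Fin.val_ne_of_ne hab)
  have h1 : (1 : ℝ) ≤ |(a : ℝ) - b| := by exact_mod_cast Int.one_le_abs hab'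
  rw [← mul_sub, abs_mul, abs_of_nonneg ht]
  exact le_mul_of_one_le_right ht h1

theorem IsSeparatedBy.add_prod {d S : ℝ} {x : ι → ℝ} {y : κ → ℝ} (hx : IsSeparatedBy d x)
    (hS : ∀ i j, |x i - x j| ≤ S) (hy : IsSeparatedBy (d + S) y) :
    IsSeparatedBy d fun q : κ × ι => y q.1 + x q.2 := by
  rintro ⟨a, i⟩ ⟨b, j⟩ hne
  by_cases hab : a = b
  · subst hab
    simpa using hx fun hij => hne (by rw [hij])
  · have hyab := hy hab
    have htri := abs_sub_abs_le_abs_sub (y a - y b) (x j - x i)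
    rw [abs_sub_comm (x j)] at htri
    have hSij := hS i j
    rw [show y a + x i - (y b + x j) = y a - y b - (x j - x i) by ring]
    linarith

end Separation

section ArrayResponse

variable {ι κ : Type*} [Fintype ι] [Fintype κ]

@[simp]
theorem arrayResponse_zero (x : ι → ℝ) : arrayResponse x 0 = Fintype.card ι := by
  simp [arrayResponse]

theorem arrayResponse_comp_equiv (x : ι → ℝ) (e : κ ≃ ι) (c : ℝ) :
    arrayResponse (x ∘ e) c = arrayResponse x c :=
  e.sum_comp fun n => exp (I * (c * x n : ℝ))

theorem arrayResponse_add_prod (y : κ → ℝ) (x : ι → ℝ) (c : ℝ) :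
    arrayResponse (fun q : κ × ι => y q.1 + x q.2) c = arrayResponse y c * arrayResponse x c := by
  simp only [arrayResponse, Fintype.sum_prod_type, Finset.sum_mul_sum, mul_add, ofReal_add,
    exp_add]

theorem arrayResponse_mul_natCast_eq_zero {p : ℕ} (hp : 2 ≤ p) {c t : ℝ}
    (h : exp (I * ↑(c * t)) = exp (2 * Real.pi * I / p)) :
    arrayResponse (fun a : Fin p => t * a) c = 0 := by
  have hterm (a : ℕ) : exp (I * ↑(c * (t * a))) = exp (2 * Real.pi * I / p) ^ a := by
    rw [← h, ← exp_nat_mul]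
    push_cast
    ring_nf
  simp only [arrayResponse, hterm,
    Fin.sum_univ_eq_sum_range (fun a => exp (2 * Real.pi * I / p) ^ a)]
  exact (isPrimitiveRoot_exp p (by omega)).geom_sum_eq_zero hp

theorem sum_conj_exp_mul_exp (x : ι → ℝ) (κ u v : ℝ) :
    ∑ n, (starRingEnd ℂ) (exp (I * ↑(κ * x n * u))) * exp (I * ↑(κ * x n * v)) =
      arrayResponse x (κ * (v - u)) := by
  refine Finset.sum_congr rfl fun n _ => ?_
  rw [← exp_conj, ← exp_add]
  simp only [map_mul, conj_I, conj_ofReal]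
  push_cast
  ring_nf

end ArrayResponse

theorem exists_ge_exp_I_mul_eq {c : ℝ} (hc : c ≠ 0) (φ r : ℝ) :
    ∃ t, r ≤ t ∧ exp (I * ↑(c * t)) = exp (I * φ) := by
  have hper : Function.Periodic (fun t : ℝ => exp (I * ↑(c * t))) (2 * Real.pi / c) := by
    intro t
    simp only [mul_add, mul_div_cancel₀ _ hc, ofReal_add, exp_add]
    push_cast
    rw [show I * (2 * Real.pi) = 2 * Real.pi * I by ring, exp_two_pi_mul_I, mul_one]
  have hper' : Function.Periodic (fun t : ℝ => exp (I * ↑(c * t))) |2 * Real.pi / c| := by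
    rcases abs_choice (2 * Real.pi / c) with h | h <;> rw [h]
    exacts [hper, hper.neg]
  obtain ⟨t, ht, heq⟩ := hper'.exists_mem_Ico (by positivity) (φ / c) r
  refine ⟨t, ht.1, ?_⟩
  simpa [mul_div_cancel₀ _ hc] using heq.symm

theorem exists_separated_prod_arrayResponse_eq_zero {ι : Type*} [Fintype ι] {d : ℝ} {x : ι → ℝ}
    (hx : IsSeparatedBy d x) {p : ℕ} (hp : 2 ≤ p) {c : ℝ} (hc : c ≠ 0) :
    ∃ y : Fin p → ℝ, IsSeparatedBy d (fun q : Fin p × ι => y q.1 + x q.2) ∧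
      arrayResponse y c = 0 := by
  obtain ⟨S, hS⟩ := Finite.exists_le fun q : ι × ι => |x q.1 - x q.2|
  obtain ⟨t, ht, hphase⟩ := exists_ge_exp_I_mul_eq hc (2 * Real.pi / p) |d + S|
  refine ⟨fun a => t * a, hx.add_prod (y := fun a : Fin p => t * a) (fun i j => hS (i, j)) ?_,
    arrayResponse_mul_natCast_eq_zero hp ?_⟩
  · exact (isSeparatedBy_mul_natCast ((abs_nonneg _).trans ht) p).mono ((le_abs_self _).trans ht)
  · rw [hphase]
    push_cast
    ring_nf

theorem Nat.exists_prime_mul_length_primeFactorsList {N : ℕ} (hN : 2 ≤ N) :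
    ∃ p M, p.Prime ∧ N = p * M ∧ N.primeFactorsList.length = M.primeFactorsList.length + 1 := by
  obtain ⟨n, rfl⟩ := Nat.exists_eq_add_of_le' hN
  rw [primeFactorsList_add_two]
  exact ⟨_, _, minFac_prime (by omega), (Nat.mul_div_cancel' (minFac_dvd _)).symm, rfl⟩

theorem exists_isSeparatedBy_arrayResponse_eq_zero {K N : ℕ}
    (hK : K ≤ N.primeFactorsList.length) (c : Fin K → ℝ) (hc : ∀ k, c k ≠ 0) (d : ℝ) :
    ∃ x : Fin N → ℝ, IsSeparatedBy d x ∧ ∀ k, arrayResponse x (c k) = 0 := by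
  induction K generalizing N with
  | zero =>
    exact ⟨fun n => |d| * n, (isSeparatedBy_mul_natCast (abs_nonneg d) N).mono (le_abs_self d),
      fun k => k.elim0⟩
  | succ K ih =>
    have hN : 2 ≤ N := by
      by_contra! h
      interval_cases N <;> simp at hK
    obtain ⟨p, M, hp, rfl, hlen⟩ := Nat.exists_prime_mul_length_primeFactorsList hN
    obtain ⟨x, hx, hxc⟩ := ih (N := M) (by omega) (fun k => c k.castSucc) (fun k => hc _)
    obtain ⟨y, hyx, hy⟩ :=
      exists_separated_prod_arrayResponse_eq_zero hx hp.two_le (hc (Fin.last K))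
    refine ⟨_ ∘ finProdFinEquiv.symm, hyx.comp_injective finProdFinEquiv.symm.injective, ?_⟩
    intro k
    rw [arrayResponse_comp_equiv, arrayResponse_add_prod]
    induction k using Fin.lastCases with
    | last => rw [hy, zero_mul]
    | cast k => rw [hxc k, mul_zero]

theorem norm_sum_conj_exp_mul_sq_le {ι : Type*} [Fintype ι] (φ : ι → ℝ) (w : ι → ℂ) :
    ‖∑ n, (starRingEnd ℂ) (exp (I * φ n)) * w n‖ ^ 2 ≤ Fintype.card ι * ∑ n, ‖w n‖ ^ 2 := by
  have hle : ‖∑ n, (starRingEnd ℂ) (exp (I * φ n)) * w n‖ ≤ ∑ n, ‖w n‖ := by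
    refine (norm_sum_le _ _).trans_eq (Finset.sum_congr rfl fun n _ => ?_)
    rw [norm_mul, RCLike.norm_conj, norm_exp_I_mul_ofReal, one_mul]
  calc _ ≤ (∑ n, ‖w n‖) ^ 2 := pow_le_pow_left₀ (norm_nonneg _) hle 2
    _ ≤ Fintype.card ι * ∑ n, ‖w n‖ ^ 2 := sq_sum_le_card_mul_sum_sq

theorem stmt_18_general (N K : ℕ) (hN : 0 < N) (hK : K ≤ N.primeFactorsList.length)
    (lam dmin : ℝ) (hlam : 0 < lam)
    (θ₀ : ℝ) (θ : Fin K → ℝ) (hθ : ∀ k, Real.cos (θ k) ≠ Real.cos θ₀) :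
    IsGreatest
      { g : ℝ | ∃ (x : Fin N → ℝ) (w : Fin N → ℂ),
          (∑ n, ‖w n‖ ^ 2 = 1) ∧
          (∀ m n : Fin N, m ≠ n → dmin ≤ |x m - x n|) ∧
          (∀ k : Fin K,
            (∑ n : Fin N,
              (starRingEnd ℂ)
                (Complex.exp (Complex.I * ((2 * Real.pi / lam) * x n * Real.cos (θ k) : ℝ))) *
              w n) = 0) ∧
          g = ‖∑ n : Fin N,
                (starRingEnd ℂ)
                  (Complex.exp (Complex.I * ((2 * Real.pi / lam) * x n * Real.cos θ₀ : ℝ))) *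
                w n‖ ^ 2 }
      (N : ℝ) := by
  set κ := 2 * Real.pi / lam
  have hc (k : Fin K) : κ * (Real.cos θ₀ - Real.cos (θ k)) ≠ 0 :=
    mul_ne_zero (by positivity) (sub_ne_zero.2 (hθ k).symm)
  obtain ⟨x, hx, hnull⟩ := exists_isSeparatedBy_arrayResponse_eq_zero hK _ hc dmin
  have hN' : (0 : ℝ) < N := Nat.cast_pos.2 hN
  set w : Fin N → ℂ := fun n => exp (I * ↑(κ * x n * Real.cos θ₀)) / (√N : ℝ)
  have hgain (u : ℝ) : ∑ n, (starRingEnd ℂ) (exp (I * ↑(κ * x n * u))) * w n =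
      arrayResponse x (κ * (Real.cos θ₀ - u)) / (√N : ℝ) := by
    simp only [w, mul_div_assoc', ← Finset.sum_div, sum_conj_exp_mul_exp]
  refine ⟨⟨x, w, ?_, hx, fun k => by rw [hgain, hnull, zero_div], ?_⟩, ?_⟩
  · have hwn (n : Fin N) : ‖w n‖ = 1 / √N := by
      rw [norm_div, norm_exp_I_mul_ofReal, norm_real, Real.norm_of_nonneg (Real.sqrt_nonneg _)]
    simp only [hwn, div_pow, one_pow, Real.sq_sqrt hN'.le, sum_const, card_univ,
      Fintype.card_fin, nsmul_eq_mul]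
    field_simp
  · rw [hgain, sub_self, mul_zero, arrayResponse_zero, Fintype.card_fin, norm_div, norm_real,
      Real.norm_of_nonneg (Real.sqrt_nonneg _), Complex.norm_natCast, div_pow, Real.sq_sqrt hN'.le]
    field_simp
  · rintro g ⟨x, w, hw, -, -, rfl⟩
    have := norm_sum_conj_exp_mul_sq_le (fun n => κ * x n * Real.cos θ₀) w
    rwa [hw, mul_one, Fintype.card_fin] at this

/-- If `K ≤ Ω(N)` (number of prime factors of `N` with multiplicity) and
`cos θ_k ≠ cos θ₀` for all `k`, then the optimum of the joint APV/AWV beamforming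
problem with unit-norm weights, minimum spacing `d_min`, and exact nulls over all
`K` undesired directions equals the full array gain `N`. -/
theorem stmt_18 (N K : ℕ) (hN : 0 < N) (hK : K ≤ N.primeFactorsList.length)
    (lam dmin : ℝ) (hlam : 0 < lam) (hdmin : 0 < dmin)
    (θ₀ : ℝ) (θ : Fin K → ℝ) (hθ : ∀ k, Real.cos (θ k) ≠ Real.cos θ₀) :
    IsGreatest
      { g : ℝ | ∃ (x : Fin N → ℝ) (w : Fin N → ℂ),
          (∑ n, ‖w n‖ ^ 2 = 1) ∧
          (∀ m n : Fin N, m ≠ n → dmin ≤ |x m - x n|) ∧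
          (∀ k : Fin K,
            (∑ n : Fin N,
              (starRingEnd ℂ)
                (Complex.exp (Complex.I * ((2 * Real.pi / lam) * x n * Real.cos (θ k) : ℝ))) *
              w n) = 0) ∧
          g = ‖∑ n : Fin N,
                (starRingEnd ℂ)
                  (Complex.exp (Complex.I * ((2 * Real.pi / lam) * x n * Real.cos θ₀ : ℝ))) *
                w n‖ ^ 2 }
      (N : ℝ) :=
  stmt_18_general N K hN hK lam dmin hlam θ₀ θ hθ
end
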